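/- arXiv:1006.5491 — 5 statements merged into one kernel-verified Lean document; each statement's English description precedes it below -/
import Mathlib

section
/- Let G be a group and let τ, τ' : G → ℝ be group homomorphisms. Write ⌊τ⌋ : G → ℤ for the function g ↦ ⌊τ(g)⌋ (integer part). Then there exists a bounded function ψ : G → ℤ such that for all g, g' ∈ G, (⌊τ⌋(g) − ⌊τ⌋(gg') + ⌊τ⌋(g')) − (⌊τ'⌋(g) − ⌊τ'⌋(gg') + ⌊τ'⌋(g')) = ψ(g) − ψ(gg') + ψ(g') if and only if the homomorphism τ − τ' takes values in ℤ. (This computes the kernel of the natural map H_b²(G;ℤ) → H_b²(G;ℝ) as H¹(G;ℝ)/H¹(G;ℤ).) -/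
/-- For group homomorphisms `τ, τ' : G → ℝ`, the difference of the bounded
2-cocycles `d⌊τ⌋` and `d⌊τ'⌋` is the coboundary of a bounded `ℤ`-valued 1-cochain iff the
homomorphism `τ - τ'` takes values in `ℤ`. (This computes the kernel of the map
`H_b²(G;ℤ) → H_b²(G;ℝ)` as `H¹(G;ℝ)/H¹(G;ℤ)`.) -/
theorem floor_cocycles_cohomologous_iff_integer_valued
    {G : Type*} [Group G] (τ τ' : G → ℝ)
    (hτ : ∀ g g' : G, τ (g * g') = τ g + τ g')
    (hτ' : ∀ g g' : G, τ' (g * g') = τ' g + τ' g') :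
    (∃ ψ : G → ℤ, (∃ C : ℤ, ∀ g : G, |ψ g| ≤ C) ∧
        ∀ g g' : G,
          ((⌊τ g⌋ - ⌊τ (g * g')⌋ + ⌊τ g'⌋) - (⌊τ' g⌋ - ⌊τ' (g * g')⌋ + ⌊τ' g'⌋)) =
            ψ g - ψ (g * g') + ψ g') ↔
      (∀ g : G, ∃ n : ℤ, τ g - τ' g = (n : ℝ)) := by
  constructor
  · rintro ⟨ψ, ⟨C, hC⟩, hψ⟩ g
    set h : G → ℤ := fun a => ⌊τ a⌋ - ⌊τ' a⌋ - ψ a with hh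
    have hadd : ∀ a b : G, h (a * b) = h a + h b := by
      intro a b
      have := hψ a b
      simp only [hh]
      omega
    have key : ∀ a : G, |(h a : ℝ) - (τ a - τ' a)| ≤ (C : ℝ) + 2 := by
      intro a
      have h1 : (⌊τ a⌋ : ℝ) ≤ τ a := Int.floor_le _
      have h2 : τ a < ⌊τ a⌋ + 1 := Int.lt_floor_add_one _
      have h3 : (⌊τ' a⌋ : ℝ) ≤ τ' a := Int.floor_le _
      have h4 : τ' a < ⌊τ' a⌋ + 1 := Int.lt_floor_add_one _
      have h5 : |(ψ a : ℝ)| ≤ (C : ℝ) := by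
        have : ((|ψ a| : ℤ) : ℝ) ≤ (C : ℝ) := by exact_mod_cast hC a
        rwa [Int.cast_abs] at this
      have h6 := abs_le.mp h5
      simp only [hh]
      push_cast
      rw [abs_le]
      constructor <;> linarith [h6.1, h6.2]
    -- powers
    have hpow : ∀ n : ℕ, (h (g ^ n) : ℝ) - (τ (g ^ n) - τ' (g ^ n)) =
        n * ((h g : ℝ) - (τ g - τ' g)) := by
      intro n
      induction n with
      | zero =>
        have e1 : h (1 : G) = 0 := by
          have := hadd 1 1; simp at this; omega
        have e2 : τ (1 : G) = 0 := by have := hτ 1 1; simp at this; linarith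
        have e3 : τ' (1 : G) = 0 := by have := hτ' 1 1; simp at this; linarith
        simp [e1, e2, e3]
      | succ n ih =>
        have e1 : h (g ^ (n + 1)) = h (g ^ n) + h g := by
          rw [pow_succ]; exact hadd _ _
        have e2 : τ (g ^ (n + 1)) = τ (g ^ n) + τ g := by rw [pow_succ]; exact hτ _ _
        have e3 : τ' (g ^ (n + 1)) = τ' (g ^ n) + τ' g := by rw [pow_succ]; exact hτ' _ _
        rw [e2, e3]
        push_cast [e1]
        push_cast at ih
        linarith [ih]
    have hzero : (h g : ℝ) - (τ g - τ' g) = 0 := by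
      by_contra hne
      have hpos : 0 < |(h g : ℝ) - (τ g - τ' g)| := abs_pos.mpr hne
      obtain ⟨n, hn⟩ := exists_nat_gt (((C : ℝ) + 2) / |(h g : ℝ) - (τ g - τ' g)|)
      have hlt : (C : ℝ) + 2 < n * |(h g : ℝ) - (τ g - τ' g)| := by
        rw [div_lt_iff₀ hpos] at hn
        linarith
      have := key (g ^ n)
      rw [hpow n, abs_mul, abs_of_nonneg (by positivity : (0:ℝ) ≤ (n:ℝ))] at this
      linarith
    exact ⟨h g, by linarith [hzero]⟩
  · intro hn
    refine ⟨0, ⟨0, by simp⟩, ?_⟩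
    intro g g'
    obtain ⟨a, ha⟩ := hn g
    obtain ⟨b, hb⟩ := hn g'
    have hgg : τ (g * g') = τ' (g * g') + (a + b : ℤ) := by
      rw [hτ, hτ']; push_cast; linarith
    have e1 : ⌊τ g⌋ = ⌊τ' g⌋ + a := by
      rw [show τ g = τ' g + (a : ℝ) by linarith, Int.floor_add_intCast]
    have e2 : ⌊τ g'⌋ = ⌊τ' g'⌋ + b := by
      rw [show τ g' = τ' g' + (b : ℝ) by linarith, Int.floor_add_intCast]
    have e3 : ⌊τ (g * g')⌋ = ⌊τ' (g * g')⌋ + (a + b) := by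
      rw [hgg, Int.floor_add_intCast]
    simp [e1, e2, e3]
    ring
end

section
/- Let G be a group, H a finitely generated subgroup of G, and x ∈ G. Then InvLO_x^H(G) ∩ Cof_x^H(G) is an open subset of InvLO_x^H(G) (in the subspace topology inherited from LO(G)). -/
/-- A subset `P ⊆ G` is the positive cone of a left ordering: `P·P ⊆ P` and
`G = P ⊔ P⁻¹ ⊔ {1}`. -/
def IsPosCone {G : Type*} [Group G] (P : Set G) : Prop :=
  (∀ a ∈ P, ∀ b ∈ P, a * b ∈ P) ∧
  (∀ g : G, g ∈ P ∨ g⁻¹ ∈ P ∨ g = 1) ∧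
  (∀ g : G, g ∈ P → g⁻¹ ∉ P) ∧
  (1 : G) ∉ P

/-- The left-invariant order determined by a positive cone: `a <_P b` iff `a⁻¹ b ∈ P`. -/
def ltC {G : Type*} [Group G] (P : Set G) (a b : G) : Prop := a⁻¹ * b ∈ P

/-- The space of left orderings of `G`, as a subspace of `G → Bool` (product of
discrete two-point spaces). -/
def LO (G : Type*) [Group G] : Type _ :=
  { P : G → Bool // IsPosCone { g : G | P g = true } }

instance (G : Type*) [Group G] : TopologicalSpace (LO G) :=
  inferInstanceAs (TopologicalSpace { P : G → Bool // IsPosCone { g : G | P g = true } })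

/-- The positive cone of a point of `LO G`. -/
def cone {G : Type*} [Group G] (P : LO G) : Set G := { g : G | P.1 g = true }

/-- `InvLO_x^H(G)`: left orderings `P` such that the right multiplication by `x`
preserves `<_P` on the subgroup generated by `H ∪ {x}`. -/
def InvLO {G : Type*} [Group G] (H : Subgroup G) (x : G) : Set (LO G) :=
  { P | ∀ b ∈ Subgroup.closure ((H : Set G) ∪ {x}),
        ∀ b' ∈ Subgroup.closure ((H : Set G) ∪ {x}),
        ltC (cone P) b b' → ltC (cone P) (b * x) (b' * x) }

/-- `Cof_x^H(G)`: left orderings of `G` for which `x` is cofinal to `H`. -/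
def Cof {G : Type*} [Group G] (H : Subgroup G) (x : G) : Set (LO G) :=
  { P | ∀ h ∈ H, ∃ N : ℕ, 1 ≤ N ∧
        ltC (cone P) (x ^ (-(N : ℤ))) h ∧ ltC (cone P) h (x ^ (N : ℤ)) }

/-!
Write `M` for the subgroup generated by `H ∪ {x}` and fix `P ∈ InvLO_x^H(G)`. Right multiplication
by any power of `x` then preserves `<_P` on `M`, so the elements `g ∈ M` with
`x⁻ᴺ <_P g <_P xᴺ` for some `N` are closed under products and inverses: they form a subgroup as
soon as they contain `1`. Hence, if `S` is a finite generating set of `H`, `x` is cofinal to `H`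
iff it bounds `1` and every `s ∈ S`, and each of these finitely many conditions is a union of
basic open sets `{P | g ∈ P}`.
-/

local notation:50 a " <[" P "] " b:50 => ltC (cone P) a b

section Cone

variable {G : Type*} [Group G] (P : LO G)

lemma ltC_trans {a b c : G} (hab : a <[P] b) (hbc : b <[P] c) :
    a <[P] c := by
  have h := P.2.1 _ hab _ hbc
  rwa [mul_assoc, mul_inv_cancel_left] at h

instance : IsTrans G (ltC (cone P)) := ⟨fun _ _ _ ↦ ltC_trans P⟩

lemma ltC_mul_left_iff (c : G) {a b : G} :
    c * a <[P] c * b ↔ a <[P] b := by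
  rw [ltC, ltC, mul_inv_rev, mul_assoc, inv_mul_cancel_left]

lemma ltC_irrefl (a : G) : ¬ a <[P] a := by
  rw [ltC, inv_mul_cancel]
  exact P.2.2.2.2

lemma ltC_asymm {a b : G} (h : a <[P] b) : ¬ b <[P] a := fun h' ↦
  P.2.2.2.1 _ h (by rwa [mul_inv_rev, inv_inv])

lemma ltC_or_ltC_of_ne {a b : G} (hab : a ≠ b) : a <[P] b ∨ b <[P] a := by
  rcases P.2.2.1 (a⁻¹ * b) with h | h | h
  · exact .inl h
  · exact .inr (by rwa [mul_inv_rev, inv_inv] at h)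
  · exact absurd (inv_mul_eq_one.mp h) hab

lemma ltC_iff_of_forall_ltC {s : Set G} {f : G → G}
    (hf : ∀ a ∈ s, ∀ b ∈ s, a <[P] b → f a <[P] f b)
    {a b : G} (ha : a ∈ s) (hb : b ∈ s) : f a <[P] f b ↔ a <[P] b := by
  refine ⟨fun h ↦ ?_, hf a ha b hb⟩
  obtain rfl | hab := eq_or_ne a b
  · exact absurd h (ltC_irrefl P _)
  exact (ltC_or_ltC_of_ne P hab).resolve_right fun hba ↦ ltC_asymm P h (hf b hb a ha hba)

lemma isOpen_setOf_ltC (a b : G) : IsOpen {P : LO G | a <[P] b} :=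
  (isOpen_discrete {true}).preimage (f := fun P : LO G ↦ P.1 (a⁻¹ * b))
    ((continuous_apply _).comp continuous_subtype_val)

end Cone

section RightMul

variable {G : Type*} [Group G]

def RightMulMonoOn (P : LO G) (M : Subgroup G) (x : G) : Prop :=
  ∀ b ∈ M, ∀ b' ∈ M, b <[P] b' → b * x <[P] b' * x

lemma RightMulMonoOn.mul_zpow_iff {P : LO G} {M : Subgroup G} {x : G}
    (hP : RightMulMonoOn P M x) (hx : x ∈ M) (n : ℤ) {b b' : G} (hb : b ∈ M) (hb' : b' ∈ M) :
    b * x ^ n <[P] b' * x ^ n ↔ b <[P] b' := by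
  have mul_x_iff {c c' : G} (hc : c ∈ M) (hc' : c' ∈ M) :
      c * x <[P] c' * x ↔ c <[P] c' :=
    ltC_iff_of_forall_ltC P (s := M) hP hc hc'
  induction n using Int.induction_on with
  | zero => simp
  | succ k ih =>
    simp only [zpow_add_one, ← mul_assoc]
    exact (mul_x_iff (mul_mem hb (zpow_mem hx _)) (mul_mem hb' (zpow_mem hx _))).trans ih
  | pred k ih =>
    refine (mul_x_iff (mul_mem hb (zpow_mem hx _)) (mul_mem hb' (zpow_mem hx _))).symm.trans ?_
    simpa only [mul_assoc, ← zpow_add_one, sub_add_cancel] using ih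

end RightMul

section PowBounded

variable {G : Type*} [Group G]

def PowBounded (P : LO G) (x g : G) : Prop :=
  ∃ N : ℕ, 1 ≤ N ∧ x ^ (-(N : ℤ)) <[P] g ∧ g <[P] x ^ (N : ℤ)

lemma isOpen_setOf_powBounded (x g : G) : IsOpen {P : LO G | PowBounded P x g} := by
  simp only [PowBounded, Set.ofPred_exists, Set.ofPred_and]
  exact isOpen_iUnion fun N ↦
    isOpen_const.inter ((isOpen_setOf_ltC _ _).inter (isOpen_setOf_ltC _ _))

variable {P : LO G} {M : Subgroup G} {x : G}

lemma PowBounded.mul (hP : RightMulMonoOn P M x) (hx : x ∈ M) {a b : G} (ha : a ∈ M)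
    (hpa : PowBounded P x a) (hpb : PowBounded P x b) : PowBounded P x (a * b) := by
  obtain ⟨N, hN, hNa, haN⟩ := hpa
  obtain ⟨K, -, hKb, hbK⟩ := hpb
  refine ⟨N + K, hN.trans (Nat.le_add_right N K), ?_, ?_⟩
  · calc x ^ (-((N + K : ℕ) : ℤ)) = x ^ (-(N : ℤ)) * x ^ (-(K : ℤ)) := by
          rw [Nat.cast_add, neg_add, zpow_add]
    _ <[P] a * x ^ (-(K : ℤ)) := (hP.mul_zpow_iff hx _ (zpow_mem hx _) ha).2 hNa
    _ <[P] a * b := (ltC_mul_left_iff P a).2 hKb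
  · calc a * b <[P] a * x ^ (K : ℤ) := (ltC_mul_left_iff P a).2 hbK
    _ <[P] x ^ (N : ℤ) * x ^ (K : ℤ) := (hP.mul_zpow_iff hx _ ha (zpow_mem hx _)).2 haN
    _ = x ^ ((N + K : ℕ) : ℤ) := by rw [Nat.cast_add, zpow_add]

lemma PowBounded.inv (hP : RightMulMonoOn P M x) (hx : x ∈ M) {a : G} (ha : a ∈ M)
    (hpa : PowBounded P x a) : PowBounded P x a⁻¹ := by
  obtain ⟨N, hN, hNa, haN⟩ := hpa
  refine ⟨N, hN, ?_, ?_⟩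
  · have h := (hP.mul_zpow_iff hx (-N) ha (zpow_mem hx _)).2 haN
    unfold ltC at h ⊢
    convert h using 1
    group
  · have h := (hP.mul_zpow_iff hx N (zpow_mem hx _) ha).2 hNa
    unfold ltC at h ⊢
    convert h using 1
    group

lemma mem_cof_iff_of_closure_eq {H : Subgroup G} {S : Set G} (hS : Subgroup.closure S = H)
    (hP : P ∈ InvLO H x) : P ∈ Cof H x ↔ PowBounded P x 1 ∧ ∀ s ∈ S, PowBounded P x s := by
  refine ⟨fun h ↦ ⟨h 1 H.one_mem, fun s hs ↦ h s (hS ▸ Subgroup.subset_closure hs)⟩, ?_⟩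
  rintro ⟨h1, hgen⟩ h hh
  have hHM : H ≤ Subgroup.closure ((H : Set G) ∪ {x}) :=
    Subgroup.subset_closure.trans' Set.subset_union_left
  have hxM : x ∈ Subgroup.closure ((H : Set G) ∪ {x}) :=
    Subgroup.subset_closure (Set.mem_union_right _ rfl)
  subst hS
  induction hh using Subgroup.closure_induction with
  | mem s hs => exact hgen s hs
  | one => exact h1
  | mul a b ha _ hpa hpb => exact PowBounded.mul hP hxM (hHM ha) hpa hpb
  | inv a ha hpa => exact PowBounded.inv hP hxM (hHM ha) hpa

end PowBounded

/-- if `H` is finitely generated, then `InvLO_x^H(G) ∩ Cof_x^H(G)` is an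
open subset of `InvLO_x^H(G)` (with the subspace topology from `LO(G)`). -/
theorem isOpen_cof_inter_invLO {G : Type*} [Group G] (H : Subgroup G) (hH : H.FG) (x : G) :
    IsOpen { P : ↥(InvLO H x) | (P : LO G) ∈ Cof H x } := by
  obtain ⟨S, hS⟩ := hH
  have hU : IsOpen ({P : LO G | PowBounded P x 1} ∩ ⋂ s ∈ S, {P | PowBounded P x s}) :=
    (isOpen_setOf_powBounded x 1).inter
      (isOpen_biInter_finset fun s _ ↦ isOpen_setOf_powBounded x s)
  convert hU.preimage continuous_subtype_val using 1
  ext P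
  simpa using mem_cof_iff_of_closure_eq hS P.2
end

section
/- Let G be a group, H a subgroup of G, x ∈ G, and P a positive cone of a left ordering of G such that 1 <_P x and x is cofinal to H (for every h ∈ H there is N ≥ 1 with x^{-N} <_P h <_P x^N). Then for every h ∈ H there exists a unique integer N ∈ ℤ with x^N ≤_P h <_P x^{N+1}. -/
/-- The non-strict order determined by a positive cone. -/
def leC {G : Type*} [Group G] (P : Set G) (a b : G) : Prop := ltC P a b ∨ a = b

/-!
A strictly increasing map `ℤ → α` taking values on both sides of `b` has exactly one
step `[f k, f (k + 1))` containing `b`: take `k` greatest with `f k ≤ b`. The positive cone makes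
`G` a linear order in which `n ↦ x ^ n` is strictly increasing, and cofinality supplies the bounds.
-/

theorem StrictMono.existsUnique_le_lt_add_one {α : Type*} [LinearOrder α] {f : ℤ → α}
    (hf : StrictMono f) {b : α} {m n : ℤ} (hm : f m ≤ b) (hn : b < f n) :
    ∃! k : ℤ, f k ≤ b ∧ b < f (k + 1) := by
  classical
  have hbdd : ∀ k, f k ≤ b → k ≤ n := fun k hk => (hf.lt_iff_lt.1 (hk.trans_lt hn)).le
  obtain ⟨k, hk, hmax⟩ := Int.exists_greatest_of_bdd ⟨n, hbdd⟩ ⟨m, hm⟩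
  have hk' : b < f (k + 1) := not_le.1 fun h => (hmax _ h).not_gt (lt_add_one k)
  refine ⟨k, ⟨hk, hk'⟩, ?_⟩
  rintro j ⟨hj, hj'⟩
  have hjk : j < k + 1 := hf.lt_iff_lt.1 (hj.trans_lt hk')
  have hkj : k < j + 1 := hf.lt_iff_lt.1 (hk.trans_lt hj')
  omega

namespace IsPosCone

variable {G : Type*} [Group G] {P : Set G}

theorem ltC_trans (hP : IsPosCone P) {a b c : G} (hab : ltC P a b) (hbc : ltC P b c) :
    ltC P a c := by
  simpa [ltC, mul_assoc] using hP.1 _ hab _ hbc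

theorem ltC_irrefl (hP : IsPosCone P) (a : G) : ¬ ltC P a a := by
  simpa [ltC] using hP.2.2.2

theorem ltC_trichotomous (hP : IsPosCone P) (a b : G) : ltC P a b ∨ a = b ∨ ltC P b a := by
  rcases hP.2.1 (a⁻¹ * b) with h | h | h
  · exact Or.inl h
  · exact Or.inr (Or.inr (by simpa [ltC] using h))
  · exact Or.inr (Or.inl (inv_mul_eq_one.1 h))

/-- Its `≤` and `<` are `leC P` and `ltC P` up to definitional unfolding, so order lemmas apply
to the cone relations directly. -/
noncomputable abbrev linearOrder (hP : IsPosCone P) : LinearOrder G where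
  le := leC P
  lt := ltC P
  le_refl _ := Or.inr rfl
  le_trans a b c := by
    rintro (hab | rfl) (hbc | rfl)
    exacts [Or.inl (hP.ltC_trans hab hbc), Or.inl hab, Or.inl hbc, Or.inr rfl]
  le_antisymm a b := by
    rintro (hab | rfl) (hba | hba)
    exacts [(hP.ltC_irrefl a (hP.ltC_trans hab hba)).elim, hba.symm, rfl, rfl]
  lt_iff_le_not_ge a b := by
    refine ⟨fun hab => ⟨Or.inl hab, ?_⟩, ?_⟩
    · rintro (hba | rfl)
      exacts [hP.ltC_irrefl a (hP.ltC_trans hab hba), hP.ltC_irrefl b hab]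
    · rintro ⟨hab | rfl, hba⟩
      exacts [hab, (hba (Or.inr rfl)).elim]
  le_total a b := by
    rcases hP.ltC_trichotomous a b with h | h | h
    exacts [Or.inl (Or.inl h), Or.inl (Or.inr h), Or.inr (Or.inl h)]
  toDecidableLE := Classical.decRel _

theorem zpow_mem (hP : IsPosCone P) {x : G} (hx : x ∈ P) {k : ℤ} (hk : 0 < k) : x ^ k ∈ P := by
  induction k, hk using Int.leInduction with
  | base => simpa using hx
  | succ n _ ih => rw [zpow_add_one]; exact hP.1 _ ih _ hx

theorem ltC_zpow_of_lt (hP : IsPosCone P) {x : G} (hx : ltC P 1 x) {m n : ℤ} (hmn : m < n) :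
    ltC P (x ^ m) (x ^ n) := by
  rw [ltC, ← zpow_neg, ← zpow_add]
  exact hP.zpow_mem (by simpa [ltC] using hx) (by omega)

end IsPosCone

/-- if `1 <_P x` and `x` is cofinal to `H` with respect to the left
ordering with positive cone `P`, then every `h ∈ H` satisfies
`x^N ≤_P h <_P x^(N+1)` for a unique integer `N`. -/
theorem existsUnique_rho {G : Type*} [Group G] (P : Set G) (hP : IsPosCone P)
    (H : Subgroup G) (x : G) (hx : ltC P 1 x)
    (hcof : ∀ h ∈ H, ∃ N : ℕ, 1 ≤ N ∧
      ltC P (x ^ (-(N : ℤ))) h ∧ ltC P h (x ^ (N : ℤ))) :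
    ∀ h ∈ H, ∃! N : ℤ, leC P (x ^ N) h ∧ ltC P h (x ^ (N + 1)) := by
  let := hP.linearOrder
  intro h hh
  obtain ⟨N, -, hlow, hhigh⟩ := hcof h hh
  exact StrictMono.existsUnique_le_lt_add_one (fun _ _ => hP.ltC_zpow_of_lt hx)
    (show x ^ (-(N : ℤ)) < h from hlow).le hhigh
end

section
/- Let G be a group, H a subgroup of G, x ∈ G, and P ∈ InvLO_x^H(G) ∩ Cof_x^H(G) with 1 <_P x. Let ρ : H → ℤ be the function characterized by x^{ρ(h)} ≤_P h <_P x^{ρ(h)+1} for all h ∈ H. Then ρ is a quasi morphism of defect 1: |ρ(hh') − ρ(h) − ρ(h')| ≤ 1 for all h, h' ∈ H. -/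
/-- `P ∈ InvLO_x^H(G)`: right multiplication by `x` preserves `<_P` on the
subgroup generated by `H ∪ {x}`. -/
def InvOn {G : Type*} [Group G] (P : Set G) (H : Subgroup G) (x : G) : Prop :=
  ∀ b ∈ Subgroup.closure ((H : Set G) ∪ {x}),
  ∀ b' ∈ Subgroup.closure ((H : Set G) ∪ {x}),
  ltC P b b' → ltC P (b * x) (b' * x)

/-- `P ∈ Cof_x^H(G)`: `x` is cofinal to `H` with respect to `<_P`. -/
def CofTo {G : Type*} [Group G] (P : Set G) (H : Subgroup G) (x : G) : Prop :=
  ∀ h ∈ H, ∃ N : ℕ, 1 ≤ N ∧ ltC P (x ^ (-(N : ℤ))) h ∧ ltC P h (x ^ (N : ℤ))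

/-!
Right multiplication by `x` is `<_P`-monotone on `⟨H, x⟩`, hence so is right multiplication by
every power of `x`. Writing `h <_P x^(ρ h + 1)` and `h' <_P x^(ρ h' + 1)`, left invariance and
then right monotonicity give `h h' <_P h x^(ρ h' + 1) <_P x^(ρ h + ρ h' + 2)`; symmetrically
`x^(ρ h + ρ h') ≤_P h h'`. Comparing with `x^(ρ(h h')) ≤_P h h' <_P x^(ρ(h h') + 1)` traps
`ρ(h h')` between `ρ h + ρ h' - 1` and `ρ h + ρ h' + 1`.
-/

namespace IsPosCone

variable {G : Type*} [Group G] {P : Set G}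

theorem ltC_asymm (hP : IsPosCone P) {a b : G} (hab : ltC P a b) : ¬ ltC P b a := by
  have := hP.2.2.1 _ hab
  rwa [show (a⁻¹ * b)⁻¹ = b⁻¹ * a by group] at this

theorem ltC_trichotomy (hP : IsPosCone P) (a b : G) : ltC P a b ∨ ltC P b a ∨ a = b := by
  rcases hP.2.1 (a⁻¹ * b) with h | h | h
  · exact Or.inl h
  · rw [show (a⁻¹ * b)⁻¹ = b⁻¹ * a by group] at h
    exact Or.inr (Or.inl h)
  · exact Or.inr (Or.inr (inv_mul_eq_one.mp h))

theorem leC_trans_ltC (hP : IsPosCone P) {a b c : G} (hab : leC P a b) (hbc : ltC P b c) :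
    ltC P a c := by
  rcases hab with hab | rfl
  exacts [hP.ltC_trans hab hbc, hbc]

theorem leC_trans (hP : IsPosCone P) {a b c : G} (hab : leC P a b) (hbc : leC P b c) :
    leC P a c := by
  rcases hbc with hbc | rfl
  exacts [Or.inl (hP.leC_trans_ltC hab hbc), hab]

end IsPosCone

section LeftInvariance

variable {G : Type*} [Group G] {P : Set G}

theorem ltC_mul_left (c : G) {a b : G} (hab : ltC P a b) : ltC P (c * a) (c * b) := by
  rwa [ltC, show (c * a)⁻¹ * (c * b) = a⁻¹ * b by group]

theorem leC_mul_left (c : G) {a b : G} (hab : leC P a b) : leC P (c * a) (c * b) := by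
  rcases hab with hab | rfl
  exacts [Or.inl (ltC_mul_left c hab), Or.inr rfl]

end LeftInvariance

section RightMonotone

variable {G : Type*} [Group G] {P : Set G} {S : Subgroup G} {x : G}

def MulRightStrictMonoOn (P : Set G) (S : Subgroup G) (x : G) : Prop :=
  ∀ b ∈ S, ∀ b' ∈ S, ltC P b b' → ltC P (b * x) (b' * x)

namespace MulRightStrictMonoOn

theorem mul_inv_right (hmono : MulRightStrictMonoOn P S x) (hP : IsPosCone P) (hxS : x ∈ S)
    {b b' : G} (hb : b ∈ S) (hb' : b' ∈ S) (hlt : ltC P b b') :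
    ltC P (b * x⁻¹) (b' * x⁻¹) := by
  rcases hP.ltC_trichotomy (b * x⁻¹) (b' * x⁻¹) with h | h | h
  · exact h
  · have := hmono _ (mul_mem hb' (inv_mem hxS)) _ (mul_mem hb (inv_mem hxS)) h
    simp only [inv_mul_cancel_right] at this
    exact absurd this (hP.ltC_asymm hlt)
  · rw [mul_right_cancel h] at hlt
    exact absurd hlt (hP.ltC_irrefl b')

theorem mul_zpow_right (hmono : MulRightStrictMonoOn P S x) (hP : IsPosCone P) (hxS : x ∈ S)
    (n : ℤ) {b b' : G} (hb : b ∈ S) (hb' : b' ∈ S) (hlt : ltC P b b') :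
    ltC P (b * x ^ n) (b' * x ^ n) := by
  induction n using Int.induction_on with
  | zero => simpa using hlt
  | succ k ih =>
    have := hmono _ (mul_mem hb (zpow_mem hxS _)) _ (mul_mem hb' (zpow_mem hxS _)) ih
    simpa only [zpow_add_one, mul_assoc] using this
  | pred k ih =>
    have := hmono.mul_inv_right hP hxS (mul_mem hb (zpow_mem hxS _))
      (mul_mem hb' (zpow_mem hxS _)) ih
    simpa only [zpow_sub_one, mul_assoc] using this

theorem leC_mul_zpow_right (hmono : MulRightStrictMonoOn P S x) (hP : IsPosCone P)
    (hxS : x ∈ S) (n : ℤ) {b b' : G} (hb : b ∈ S) (hb' : b' ∈ S) (hle : leC P b b') :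
    leC P (b * x ^ n) (b' * x ^ n) := by
  rcases hle with hlt | rfl
  exacts [Or.inl (hmono.mul_zpow_right hP hxS n hb hb' hlt), Or.inr rfl]

theorem mul_ltC_zpow_add (hmono : MulRightStrictMonoOn P S x) (hP : IsPosCone P) (hxS : x ∈ S)
    {h h' : G} {m n : ℤ} (hh : h ∈ S) (hm : ltC P h (x ^ m)) (hn : ltC P h' (x ^ n)) :
    ltC P (h * h') (x ^ (m + n)) := by
  have hright := hmono.mul_zpow_right hP hxS n hh (zpow_mem hxS m) hm
  rw [← zpow_add] at hright
  exact hP.ltC_trans (ltC_mul_left h hn) hright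

theorem zpow_add_leC_mul (hmono : MulRightStrictMonoOn P S x) (hP : IsPosCone P) (hxS : x ∈ S)
    {h h' : G} {m n : ℤ} (hh : h ∈ S) (hm : leC P (x ^ m) h) (hn : leC P (x ^ n) h') :
    leC P (x ^ (m + n)) (h * h') := by
  have hright := hmono.leC_mul_zpow_right hP hxS n (zpow_mem hxS m) hh hm
  rw [← zpow_add] at hright
  exact hP.leC_trans hright (leC_mul_left h hn)

end MulRightStrictMonoOn

end RightMonotone

section Powers

variable {G : Type*} [Group G] {P : Set G} {x : G}

theorem pow_succ_mem_of_one_ltC (hP : IsPosCone P) (hx : ltC P 1 x) (n : ℕ) :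
    x ^ (n + 1) ∈ P := by
  have hxP : x ∈ P := by simpa [ltC] using hx
  induction n with
  | zero => simpa using hxP
  | succ n ih => rw [pow_succ]; exact hP.1 _ ih _ hxP

theorem ltC_zpow_of_lt (hP : IsPosCone P) (hx : ltC P 1 x) {a b : ℤ} (hab : a < b) :
    ltC P (x ^ a) (x ^ b) := by
  obtain ⟨n, hn⟩ : ∃ n : ℕ, b - a = n + 1 := ⟨(b - a - 1).toNat, by omega⟩
  have hpow : (x ^ a)⁻¹ * x ^ b = x ^ (n + 1) := by
    rw [← zpow_neg, ← zpow_add, neg_add_eq_sub, hn]; norm_cast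
  rw [ltC, hpow]
  exact pow_succ_mem_of_one_ltC hP hx n

theorem lt_of_ltC_zpow (hP : IsPosCone P) (hx : ltC P 1 x) {a b : ℤ}
    (hab : ltC P (x ^ a) (x ^ b)) : a < b := by
  by_contra! hba
  rcases hba.eq_or_lt with rfl | hlt
  exacts [hP.ltC_irrefl _ hab, hP.ltC_asymm hab (ltC_zpow_of_lt hP hx hlt)]

theorem lt_of_zpow_leC_of_ltC_zpow (hP : IsPosCone P) (hx : ltC P 1 x) {a b : ℤ} {g : G}
    (ha : leC P (x ^ a) g) (hb : ltC P g (x ^ b)) : a < b :=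
  lt_of_ltC_zpow hP hx (hP.leC_trans_ltC ha hb)

end Powers

theorem rho_quasimorphism_defect_one_general {G : Type*} [Group G] (P : Set G) (hP : IsPosCone P)
    (H : Subgroup G) (x : G) (hinv : InvOn P H x)
    (hx : ltC P 1 x) (ρ : G → ℤ)
    (hρ : ∀ h ∈ H, leC P (x ^ ρ h) h ∧ ltC P h (x ^ (ρ h + 1))) :
    ∀ h ∈ H, ∀ h' ∈ H, |ρ (h * h') - ρ h - ρ h'| ≤ 1 := by
  intro h hh h' hh'
  have hmono : MulRightStrictMonoOn P (Subgroup.closure ((H : Set G) ∪ {x})) x := hinv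
  have hxS : x ∈ Subgroup.closure ((H : Set G) ∪ {x}) := Subgroup.subset_closure (Or.inr rfl)
  have hhS : h ∈ Subgroup.closure ((H : Set G) ∪ {x}) := Subgroup.subset_closure (Or.inl hh)
  obtain ⟨hle, hlt⟩ := hρ h hh
  obtain ⟨hle', hlt'⟩ := hρ h' hh'
  obtain ⟨hle'', hlt''⟩ := hρ (h * h') (mul_mem hh hh')
  have hupper : ρ (h * h') < ρ h + 1 + (ρ h' + 1) :=
    lt_of_zpow_leC_of_ltC_zpow hP hx hle'' (hmono.mul_ltC_zpow_add hP hxS hhS hlt hlt')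
  have hlower : ρ h + ρ h' < ρ (h * h') + 1 :=
    lt_of_zpow_leC_of_ltC_zpow hP hx (hmono.zpow_add_leC_mul hP hxS hhS hle hle') hlt''
  rw [abs_le]
  omega

/-- the function `ρ : H → ℤ` characterized by `x^(ρ h) ≤_P h <_P x^(ρ h + 1)`
is a quasi morphism of defect 1. -/
theorem rho_quasimorphism_defect_one {G : Type*} [Group G] (P : Set G) (hP : IsPosCone P)
    (H : Subgroup G) (x : G) (hinv : InvOn P H x) (hcof : CofTo P H x)
    (hx : ltC P 1 x) (ρ : G → ℤ)
    (hρ : ∀ h ∈ H, leC P (x ^ ρ h) h ∧ ltC P h (x ^ (ρ h + 1))) :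
    ∀ h ∈ H, ∀ h' ∈ H, |ρ (h * h') - ρ h - ρ h'| ≤ 1 :=
  rho_quasimorphism_defect_one_general P hP H x hinv hx ρ hρ
end

section
/- Let A be a free abelian group of finite rank m ≥ 1 (A ≅ ℤ^m), let x ∈ A be a nonzero element, and let τ : A → ℝ be a group homomorphism with τ(x) = 1. Then there exists a positive cone P of a left ordering of A such that x is cofinal in A with respect to P (for every a ∈ A there is N ≥ 1 with x^{-N} <_P a <_P x^N) and such that the stable map satisfies ρ̄_{x,P}(a) = τ(a) for every a ∈ A. (This is the abelian case of the computation of the image of ψ_x: every class [τ] with τ(x)=1 is realized by a left ordering.) -/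
open Filter Topology

/-! Order `A` by `a ↦ (τ a, coordinates of a)` in `ℝ ×ₗ Lex ℤ^m`: this map is an injective
homomorphism, so pulling back the positive elements gives a positive cone. Since the `τ`-coordinate
dominates and `τ x = 1`, the element `x` is positive and cofinal, and `x^k ≤ a < x^(k+1)` forces
`|k - τ a| ≤ 1`; applied to `a^N` this bounded error disappears after dividing by `N`. -/

open Function Multiplicative

section PosCone

variable {G H : Type*} [Group G] [CommGroup H] [LinearOrder H] [IsOrderedMonoid H] (f : G →* H)

def comapPosCone : Set G := {g | 1 < f g}

theorem ltC_comapPosCone_iff {a b : G} : ltC (comapPosCone f) a b ↔ f a < f b := by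
  simp only [ltC, comapPosCone, Set.mem_ofPred_eq, map_mul, map_inv, lt_inv_mul_iff_mul_lt,
    mul_one]

variable {f}

theorem leC_comapPosCone_iff (hf : Injective f) {a b : G} :
    leC (comapPosCone f) a b ↔ f a ≤ f b := by
  rw [leC, ltC_comapPosCone_iff, le_iff_lt_or_eq, hf.eq_iff]

theorem isPosCone_comapPosCone (hf : Injective f) : IsPosCone (comapPosCone f) := by
  simp only [IsPosCone, comapPosCone, Set.mem_ofPred_eq, map_mul, map_inv, one_lt_inv', map_one,
    lt_irrefl, not_false_eq_true, and_true]
  refine ⟨fun a ha b hb => one_lt_mul' ha hb, fun g => ?_, fun g hg => hg.not_gt⟩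
  rcases lt_trichotomy (f g) 1 with hlt | heq | hgt
  · exact Or.inr (Or.inl hlt)
  · exact Or.inr (Or.inr (hf (heq.trans f.map_one.symm)))
  · exact Or.inl hgt

end PosCone

section Floor

variable {H : Type*} [Group H] [LinearOrder H] {σ : H →*o Multiplicative ℝ} {x : H}

theorem toAdd_map_zpow (hσx : toAdd (σ x) = 1) (k : ℤ) : toAdd (σ (x ^ k)) = k := by
  rw [map_zpow, toAdd_zpow, hσx, zsmul_eq_mul, mul_one]

theorem le_toAdd_of_zpow_le (hσx : toAdd (σ x) = 1) {k : ℤ} {y : H} (h : x ^ k ≤ y) :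
    (k : ℝ) ≤ toAdd (σ y) := by
  rw [← toAdd_map_zpow hσx]
  exact toAdd_le.2 (σ.monotone' h)

theorem toAdd_le_of_le_zpow (hσx : toAdd (σ x) = 1) {k : ℤ} {y : H} (h : y ≤ x ^ k) :
    toAdd (σ y) ≤ k := by
  rw [← toAdd_map_zpow hσx]
  exact toAdd_le.2 (σ.monotone' h)

theorem one_lt_of_toAdd_eq_one (hσx : toAdd (σ x) = 1) : 1 < x := by
  refine lt_of_not_ge fun h => ?_
  have := toAdd_le_of_le_zpow hσx (k := 0) (y := x) (by rwa [zpow_zero])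
  rw [hσx, Int.cast_zero] at this
  exact zero_lt_one.not_ge this

theorem exists_zpow_neg_lt_and_lt_zpow (hσx : toAdd (σ x) = 1) (y : H) :
    ∃ N : ℕ, 1 ≤ N ∧ x ^ (-(N : ℤ)) < y ∧ y < x ^ (N : ℤ) := by
  refine ⟨⌈|toAdd (σ y)|⌉₊ + 1, le_add_self, lt_of_not_ge fun h => ?_,
    lt_of_not_ge fun h => ?_⟩
  · have := toAdd_le_of_le_zpow hσx h
    push_cast at this
    linarith [neg_abs_le (toAdd (σ y)), Nat.le_ceil |toAdd (σ y)|]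
  · have := le_toAdd_of_zpow_le hσx h
    push_cast at this
    linarith [le_abs_self (toAdd (σ y)), Nat.le_ceil |toAdd (σ y)|]

theorem exists_zpow_le_and_lt_zpow_add_one (hσx : toAdd (σ x) = 1) (y : H) :
    ∃ k : ℤ, x ^ k ≤ y ∧ y < x ^ (k + 1) := by
  obtain ⟨N, -, hlow, -⟩ := exists_zpow_neg_lt_and_lt_zpow hσx y
  obtain ⟨k, hk, hmax⟩ := Int.exists_greatest_of_bdd
    ⟨⌈toAdd (σ y)⌉, fun k hk => Int.cast_le.1 ((le_toAdd_of_zpow_le hσx hk).trans (Int.le_ceil _))⟩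
    ⟨_, hlow.le⟩
  exact ⟨k, hk, lt_of_not_ge fun h => (hmax _ h).not_gt (lt_add_one k)⟩

end Floor

theorem tendsto_div_natCast_of_abs_sub_mul_le {u : ℕ → ℝ} {c C : ℝ}
    (h : ∀ N : ℕ, |u N - N * c| ≤ C) : Tendsto (fun N : ℕ => u N / N) atTop (𝓝 c) := by
  have hC := tendsto_const_div_atTop_nhds_zero_nat C
  refine tendsto_of_tendsto_of_tendsto_of_le_of_le'
    (by simpa using (tendsto_const_nhds (x := c)).sub hC)
    (by simpa using (tendsto_const_nhds (x := c)).add hC) ?_ ?_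
  all_goals
    filter_upwards [eventually_gt_atTop 0] with N hN
    have hN' : (0 : ℝ) < N := Nat.cast_pos.2 hN
    have := abs_le.1 (h N)
  · rw [le_div_iff₀ hN', sub_mul, div_mul_cancel₀ _ hN'.ne']
    linarith
  · rw [div_le_iff₀ hN', add_mul, div_mul_cancel₀ _ hN'.ne']
    linarith

theorem exists_posCone_realizing_of_injective {A H : Type*} [Group A] [CommGroup H]
    [LinearOrder H] [IsOrderedMonoid H] {f : A →* H} (hf : Injective f)
    (σ : H →*o Multiplicative ℝ) (x : A) (τ : A → ℝ) (hτf : ∀ a, τ a = toAdd (σ (f a)))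
    (hτx : τ x = 1) :
    ∃ (P : Set A) (ρ : A → ℤ), IsPosCone P ∧
      (∀ a : A, ∃ N : ℕ, 1 ≤ N ∧ ltC P (x ^ (-(N : ℤ))) a ∧ ltC P a (x ^ (N : ℤ))) ∧
      (ltC P 1 x → ∀ a : A, leC P (x ^ ρ a) a ∧ ltC P a (x ^ (ρ a + 1))) ∧
      (ltC P x 1 → ∀ a : A, ltC P (x ^ (-(ρ a) - 1)) a ∧ leC P a (x ^ (-(ρ a)))) ∧
      (∀ a : A, Tendsto (fun N : ℕ => (ρ (a ^ N) : ℝ) / N) atTop (𝓝 (τ a))) := by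
  have hσx : toAdd (σ (f x)) = 1 := (hτf x).symm.trans hτx
  choose ρ hρ using fun a => exists_zpow_le_and_lt_zpow_add_one hσx (f a)
  refine ⟨comapPosCone f, ρ, isPosCone_comapPosCone hf, fun a => ?_, fun _ a => ?_,
    fun h => absurd ((ltC_comapPosCone_iff f).1 h) ?_, fun a => ?_⟩
  · simpa only [ltC_comapPosCone_iff, map_zpow] using exists_zpow_neg_lt_and_lt_zpow hσx (f a)
  · simpa only [leC_comapPosCone_iff hf, ltC_comapPosCone_iff, map_zpow] using hρ a
  · simpa only [map_one, not_lt] using (one_lt_of_toAdd_eq_one hσx).le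
  · refine tendsto_div_natCast_of_abs_sub_mul_le (C := 1) fun N => abs_le.2 ⟨?_, ?_⟩
    all_goals
      have hlow := le_toAdd_of_zpow_le hσx (hρ (a ^ N)).1
      have hup := toAdd_le_of_le_zpow hσx (hρ (a ^ N)).2.le
      rw [map_pow, map_pow, toAdd_pow, nsmul_eq_mul, ← hτf] at hlow hup
      push_cast at hup
      linarith

theorem exists_ordering_realizing_homomorphism_general {A : Type*} [CommGroup A]
    (m : ℕ) (eA : A ≃* Multiplicative (Fin m → ℤ))
    (x : A)
    (τ : A → ℝ) (hτ : ∀ a b : A, τ (a * b) = τ a + τ b) (hτx : τ x = 1) :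
    ∃ (P : Set A) (ρ : A → ℤ), IsPosCone P ∧
      (∀ a : A, ∃ N : ℕ, 1 ≤ N ∧ ltC P (x ^ (-(N : ℤ))) a ∧ ltC P a (x ^ (N : ℤ))) ∧
      (ltC P 1 x → ∀ a : A, leC P (x ^ ρ a) a ∧ ltC P a (x ^ (ρ a + 1))) ∧
      (ltC P x 1 → ∀ a : A, ltC P (x ^ (-(ρ a) - 1)) a ∧ leC P a (x ^ (-(ρ a)))) ∧
      (∀ a : A, Tendsto (fun N : ℕ => (ρ (a ^ N) : ℝ) / N) atTop (𝓝 (τ a))) := by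
  let τHom : A →* Multiplicative ℝ := MonoidHom.mk' (fun a => ofAdd (τ a)) hτ
  let lexCoords : A ≃* Multiplicative (Lex (Fin m → ℤ)) :=
    eA.trans (AddEquiv.toMultiplicative (toLexAddEquiv _))
  let f : A →* Multiplicative ℝ ×ₗ Multiplicative (Lex (Fin m → ℤ)) :=
    (toLexMulEquiv _).toMonoidHom.comp (τHom.prod lexCoords.toMonoidHom)
  have hf : Injective f := fun a b hab =>
    lexCoords.injective (congrArg (fun p => (ofLex p).2) hab)
  exact exists_posCone_realizing_of_injective hf (OrderMonoidHom.fstₗ _ _) x τ (fun _ => rfl) hτx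

/-- Let `A` be a free abelian group of rank `m ≥ 1`, `x ∈ A` nonzero, and
`τ : A → ℝ` a homomorphism with `τ(x) = 1`. Then there is a left ordering `P` of `A` such
that `x` is cofinal in `A` and the stable map `ρ̄_{x,P}` equals `τ`. -/
theorem exists_ordering_realizing_homomorphism {A : Type*} [CommGroup A]
    (m : ℕ) (hm : 1 ≤ m) (eA : A ≃* Multiplicative (Fin m → ℤ))
    (x : A) (hx : x ≠ 1)
    (τ : A → ℝ) (hτ : ∀ a b : A, τ (a * b) = τ a + τ b) (hτx : τ x = 1) :
    ∃ (P : Set A) (ρ : A → ℤ), IsPosCone P ∧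
      (∀ a : A, ∃ N : ℕ, 1 ≤ N ∧ ltC P (x ^ (-(N : ℤ))) a ∧ ltC P a (x ^ (N : ℤ))) ∧
      (ltC P 1 x → ∀ a : A, leC P (x ^ ρ a) a ∧ ltC P a (x ^ (ρ a + 1))) ∧
      (ltC P x 1 → ∀ a : A, ltC P (x ^ (-(ρ a) - 1)) a ∧ leC P a (x ^ (-(ρ a)))) ∧
      (∀ a : A, Tendsto (fun N : ℕ => (ρ (a ^ N) : ℝ) / N) atTop (𝓝 (τ a))) :=
  exists_ordering_realizing_homomorphism_general m eA x τ hτ hτx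
end
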